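/- arXiv:2406.03370 — 3 statements merged into one kernel-verified Lean document; each statement's English description precedes it below -/
import Mathlib

section
/- Let k be a field and Γ a k-algebra which is a principal ideal domain with center Z, and assume Γ is generated by m elements as a Z-module. Let b ∈ Γ be such that Γb = bΓ is a maximal two-sided ideal of Γ, set I = Z ∩ Γb, and let p ∈ Γ be an atom with b ∈ Γp (so p is a right atomic factor of b and Γ/Γp is a simple left Γ-module). Then endol(Γ/Γp) ≤ m · ℓ_Z(Z/I), where ℓ_Z denotes length as a Z-module. -/
open scoped TensorProduct

universe u

/-- The length of a module, computed as the Krull dimension (longest chain) of its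
lattice of submodules. -/
noncomputable def moduleLength (R M : Type*) [Ring R] [AddCommGroup M] [Module R M] : ℕ∞ :=
  WithBot.unbotD 0 (Order.krullDim (Submodule R M))

/-- The endolength of a module `M`: its length as a module over its endomorphism ring
`Module.End R M`, which acts on `M` by evaluation. -/
noncomputable def endol (R M : Type*) [Ring R] [AddCommGroup M] [Module R M] : ℕ∞ :=
  moduleLength (Module.End R M) M

/-- A module is indecomposable if it is nonzero and is not the (internal) direct sum of
two nonzero submodules. -/
def IsIndecomposableModule (R : Type*) (M : Type*) [Ring R] [AddCommGroup M] [Module R M] :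
    Prop :=
  Nontrivial M ∧ ∀ N₁ N₂ : Submodule R M, IsCompl N₁ N₂ → N₁ = ⊥ ∨ N₂ = ⊥

/-- A (possibly noncommutative) principal ideal domain: a nontrivial ring with no zero
divisors in which every left ideal and every right ideal is principal. -/
def IsPID (Γ : Type u) [Ring Γ] : Prop :=
  Nontrivial Γ ∧ (∀ a b : Γ, a * b = 0 → a = 0 ∨ b = 0) ∧
    (∀ I : Submodule Γ Γ, I.IsPrincipal) ∧
    (∀ I : Submodule Γᵐᵒᵖ Γ, I.IsPrincipal)

/-- A bounded principal ideal domain: a PID in which every nonzero left ideal and every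
nonzero right ideal contains a nonzero two-sided ideal. -/
def IsBoundedPID (Γ : Type u) [Ring Γ] : Prop :=
  IsPID Γ ∧
    (∀ I : Submodule Γ Γ, I ≠ ⊥ →
      ∃ J : Submodule Γ Γ, J ≠ ⊥ ∧ (∀ x ∈ J, ∀ r : Γ, x * r ∈ J) ∧ J ≤ I) ∧
    (∀ I : Submodule Γᵐᵒᵖ Γ, I ≠ ⊥ →
      ∃ J : Submodule Γᵐᵒᵖ Γ, J ≠ ⊥ ∧ (∀ x ∈ J, ∀ r : Γ, r * x ∈ J) ∧ J ≤ I)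

lemma height_add_one_le {α : Type*} [Preorder α] {a b : α} (h : a < b) :
    Order.height a + 1 ≤ Order.height b := by
  rw [Order.height_eq_iSup_lt_height b]
  exact le_iSup₂_of_le a h le_rfl

lemma ltseries_prod_le {α β : Type*} [PartialOrder α] [PartialOrder β] :
    ∀ (n : ℕ) (p : LTSeries (α × β)), p.length = n →
      (p.length : ℕ∞) ≤ Order.height p.last.1 + Order.height p.last.2 := by
  intro n
  induction n with
  | zero => intro p hp; simp [hp]
  | succ n ih =>
    intro p hp
    have hne : p.length ≠ 0 := by omega
    have h := p.eraseLast_last_rel_last hne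
    have hlen : p.eraseLast.length = n := by simp [hp]
    have h0 := ih p.eraseLast hlen
    rw [hlen] at h0
    rw [hp]
    rcases Prod.lt_iff.mp h with ⟨h1, h2⟩ | ⟨h1, h2⟩
    · calc ((n + 1 : ℕ) : ℕ∞) = (n : ℕ∞) + 1 := by push_cast; ring
        _ ≤ (Order.height p.eraseLast.last.1 + Order.height p.eraseLast.last.2) + 1 := by
            exact add_le_add h0 le_rfl
        _ = (Order.height p.eraseLast.last.1 + 1) + Order.height p.eraseLast.last.2 := by ring
        _ ≤ Order.height p.last.1 + Order.height p.last.2 :=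
            add_le_add (height_add_one_le h1) (Order.height_mono h2)
    · calc ((n + 1 : ℕ) : ℕ∞) = (n : ℕ∞) + 1 := by push_cast; ring
        _ ≤ (Order.height p.eraseLast.last.1 + Order.height p.eraseLast.last.2) + 1 := by
            exact add_le_add h0 le_rfl
        _ = Order.height p.eraseLast.last.1 + (Order.height p.eraseLast.last.2 + 1) := by ring
        _ ≤ Order.height p.last.1 + Order.height p.last.2 :=
            add_le_add (Order.height_mono h1) (height_add_one_le h2)

lemma height_prod_le {α β : Type*} [PartialOrder α] [PartialOrder β] (x : α × β) :
    Order.height x ≤ Order.height x.1 + Order.height x.2 := by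
  apply Order.height_le
  intro p hp
  have := ltseries_prod_le p.length p rfl
  rwa [hp] at this

lemma moduleLength_eq_height (R M : Type*) [Ring R] [AddCommGroup M] [Module R M] :
    moduleLength R M = Order.height (⊤ : Submodule R M) := by
  rw [moduleLength, ← Order.height_top_eq_krullDim]
  rfl


lemma moduleLength_le_of_surjective {R : Type*} {M N : Type*} [Ring R]
    [AddCommGroup M] [Module R M] [AddCommGroup N] [Module R N]
    (f : M →ₗ[R] N) (hf : Function.Surjective f) :
    moduleLength R N ≤ moduleLength R M := by
  rw [moduleLength_eq_height, moduleLength_eq_height]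
  have hsm : StrictMono (fun q : Submodule R N => q.comap f) := by
    apply Monotone.strictMono_of_injective
    · exact fun a b hab => Submodule.comap_mono hab
    · exact Submodule.comap_injective_of_surjective hf
  have := Order.height_le_height_apply_of_strictMono _ hsm (⊤ : Submodule R N)
  simpa [Submodule.comap_top] using this

lemma moduleLength_le_add {R M : Type*} [Ring R] [AddCommGroup M] [Module R M]
    (N : Submodule R M) :
    moduleLength R M ≤ moduleLength R N + moduleLength R (M ⧸ N) := by
  rw [moduleLength_eq_height, moduleLength_eq_height, moduleLength_eq_height]
  set f : Submodule R M → Submodule R N × Submodule R (M ⧸ N) :=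
    fun x => (x.comap N.subtype, x.map N.mkQ) with hf
  have hsm : StrictMono f := by
    intro x y hxy
    have hle : f x ≤ f y :=
      ⟨Submodule.comap_mono hxy.le, Submodule.map_mono hxy.le⟩
    refine lt_of_le_of_ne hle ?_
    intro heq
    have h1 : N ⊓ x = N ⊓ y := by
      have := congrArg Prod.fst heq
      have := congrArg (Submodule.map N.subtype) this
      simpa [hf, Submodule.map_comap_subtype] using this
    have h2 : N ⊔ x = N ⊔ y := by
      have := congrArg Prod.snd heq
      have := congrArg (Submodule.comap N.mkQ) this
      simpa [hf, Submodule.comap_map_mkQ] using this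
    have h1' : y ⊓ N ≤ x ⊓ N := by rw [inf_comm x N, inf_comm y N]; exact h1.ge
    have := sup_lt_sup_of_lt_of_inf_le_inf hxy h1'
    rw [sup_comm x N, sup_comm y N] at this
    exact this.ne h2
  have := Order.height_le_height_apply_of_strictMono _ hsm (⊤ : Submodule R M)
  refine this.trans ?_
  refine (height_prod_le (f ⊤)).trans ?_
  apply add_le_add
  · exact Order.height_mono le_top
  · exact Order.height_mono le_top

lemma moduleLength_le_of_cyclic {R M : Type*} [Ring R] [AddCommGroup M] [Module R M]
    (I : Ideal R) (x : M) (hx : Submodule.span R {x} = ⊤)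
    (hI : ∀ i ∈ I, i • x = (0 : M)) :
    moduleLength R M ≤ moduleLength R (R ⧸ I) := by
  have hker : I ≤ LinearMap.ker (LinearMap.toSpanSingleton R M x) := by
    intro i hi
    simpa [LinearMap.mem_ker, LinearMap.toSpanSingleton_apply] using hI i hi
  refine moduleLength_le_of_surjective (I.liftQ (LinearMap.toSpanSingleton R M x) hker) ?_
  intro y
  have hy : y ∈ Submodule.span R {x} := by rw [hx]; trivial
  obtain ⟨r, hr⟩ := Submodule.mem_span_singleton.mp hy
  exact ⟨Submodule.Quotient.mk r, by simpa [LinearMap.toSpanSingleton_apply] using hr⟩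

lemma moduleLength_le_other {A B M : Type*} [Ring A] [Ring B] [AddCommGroup M]
    [Module A M] [Module B M]
    (h : ∀ (b : B) (N : Submodule A M), ∀ x ∈ N, b • x ∈ N) :
    moduleLength A M ≤ moduleLength B M := by
  rw [moduleLength_eq_height, moduleLength_eq_height]
  set f : Submodule A M → Submodule B M := fun N =>
    { carrier := N
      add_mem' := fun ha hb => N.add_mem ha hb
      zero_mem' := N.zero_mem
      smul_mem' := fun c x hx => h c N x hx } with hfdef
  have hsm : StrictMono f := by
    apply Monotone.strictMono_of_injective
    · intro a b hab x hx; exact hab hx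
    · intro a b hab
      ext x
      exact SetLike.ext_iff.mp hab x
  have := Order.height_le_height_apply_of_strictMono _ hsm (⊤ : Submodule A M)
  refine this.trans (Order.height_mono le_top)

lemma moduleLength_le_of_gen {R : Type u} [Ring R] (I : Ideal R) :
    ∀ (n : ℕ) (M : Type v) [AddCommGroup M] [Module R M] (x : Fin n → M),
      Submodule.span R (Set.range x) = ⊤ → (∀ i ∈ I, ∀ m : M, i • m = 0) →
      moduleLength R M ≤ (n : ℕ∞) * moduleLength R (R ⧸ I) := by
  intro n
  induction n with
  | zero =>
    intro M _ _ x hx _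
    have : (⊤ : Submodule R M) = ⊥ := by
      rw [← hx]
      simp [Set.range_eq_empty]
    rw [moduleLength_eq_height, this]
    simp
  | succ n ih =>
    intro M _ _ x hx hann
    set N : Submodule R M := Submodule.span R {x 0} with hN
    have hx0 : x 0 ∈ N := Submodule.subset_span rfl
    -- N is cyclic
    have hcyc : Submodule.span R {(⟨x 0, hx0⟩ : N)} = ⊤ := by
      rw [eq_top_iff]
      rintro ⟨y, hy⟩ -
      have : y ∈ Submodule.span R {x 0} := hy
      obtain ⟨r, hr⟩ := Submodule.mem_span_singleton.mp this
      exact Submodule.mem_span_singleton.mpr ⟨r, Subtype.ext hr⟩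
    have hNlen : moduleLength R N ≤ moduleLength R (R ⧸ I) :=
      moduleLength_le_of_cyclic I ⟨x 0, hx0⟩ hcyc
        (fun i hi => Subtype.ext (hann i hi (x 0)))
    -- M ⧸ N is generated by n elements
    have hgen' : Submodule.span R (Set.range fun j : Fin n => N.mkQ (x j.succ)) = ⊤ := by
      rw [eq_top_iff]
      rintro y -
      obtain ⟨z, rfl⟩ := N.mkQ_surjective y
      have hz : z ∈ Submodule.span R (Set.range x) := by rw [hx]; trivial
      refine Submodule.span_induction ?_ ?_ ?_ ?_ hz
      · rintro _ ⟨i, rfl⟩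
        refine Fin.cases ?_ ?_ i
        · have : N.mkQ (x 0) = 0 := by
            rw [Submodule.mkQ_apply, Submodule.Quotient.mk_eq_zero]
            exact hx0
          rw [this]; exact Submodule.zero_mem _
        · intro j
          exact Submodule.subset_span ⟨j, rfl⟩
      · simp
      · intro a b _ _ ha hb
        rw [map_add]; exact Submodule.add_mem _ ha hb
      · intro r a _ ha
        rw [map_smul]; exact Submodule.smul_mem _ r ha
    have hann' : ∀ i ∈ I, ∀ m : M ⧸ N, i • m = 0 := by
      intro i hi m
      obtain ⟨z, rfl⟩ := N.mkQ_surjective m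
      rw [← map_smul, hann i hi z, map_zero]
    have hQ := ih (M ⧸ N) (fun j : Fin n => N.mkQ (x j.succ)) hgen' hann'
    calc moduleLength R M ≤ moduleLength R N + moduleLength R (M ⧸ N) :=
          moduleLength_le_add N
      _ ≤ moduleLength R (R ⧸ I) + (n : ℕ∞) * moduleLength R (R ⧸ I) :=
          add_le_add hNlen hQ
      _ = ((n + 1 : ℕ) : ℕ∞) * moduleLength R (R ⧸ I) := by
          push_cast; ring


/-- Let `Γ` be a `k`-algebra which is a PID with center `Z`, generated
by `m` elements as a `Z`-module. If `Γb = bΓ` is a maximal two-sided ideal,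
`I = Z ∩ Γb`, and `p` is an atom dividing `b` on the right (i.e. `b ∈ Γp`), then
`endol(Γ/Γp) ≤ m · ℓ_Z(Z/I)`. -/
theorem stmt_9 {k Γ : Type u} [Field k] [Ring Γ] [Algebra k Γ] (hΓ : IsPID Γ)
    (m : ℕ) (s : Fin m → Γ)
    (hgen : ∀ x : Γ, ∃ c : Fin m → Subring.center Γ, x = ∑ i, (c i : Γ) * s i)
    (b : Γ)
    (hbil : (Set.range fun γ : Γ => γ * b) = (Set.range fun γ : Γ => b * γ))
    (hbne : (Ideal.span {b} : Ideal Γ) ≠ ⊤)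
    (hbmax : ∀ J : Ideal Γ, (∀ x ∈ J, ∀ r : Γ, x * r ∈ J) →
      (Ideal.span {b} : Ideal Γ) < J → J = ⊤)
    (p : Γ) (hp : Irreducible p) (hbp : b ∈ (Ideal.span {p} : Ideal Γ)) :
    endol Γ (Γ ⧸ (Ideal.span {p} : Ideal Γ)) ≤
      (m : ℕ∞) *
        moduleLength (Subring.center Γ)
          ((Subring.center Γ) ⧸
            Ideal.comap (SubringClass.subtype (Subring.center Γ)) (Ideal.span {b})) := by
  classical
  set Zc := Subring.center Γ with hZc
  set B : Ideal Γ := Ideal.span {b} with hB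
  set P : Ideal Γ := Ideal.span {p} with hP
  set I : Ideal Zc := Ideal.comap (SubringClass.subtype Zc) B with hI
  have step1 : endol Γ (Γ ⧸ P) ≤ moduleLength Zc (Γ ⧸ P) := by
    apply moduleLength_le_other
    intro z N x hx
    set e : Module.End Γ (Γ ⧸ P) :=
      { toFun := fun mm => (z : Γ) • mm
        map_add' := fun a c => smul_add _ a c
        map_smul' := fun γ mm => by
          simp only [RingHom.id_apply]
          rw [smul_smul, smul_smul, Subring.mem_center_iff.mp z.2 γ] } with he
    have : z • x = e • x := rfl
    rw [this]
    exact N.smul_mem e hx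
  have hBP : B ≤ P := by
    rw [hB, Ideal.span_le]
    simpa using hbp
  have step2 : moduleLength Zc (Γ ⧸ P) ≤ moduleLength Zc (Γ ⧸ B) := by
    have hle : B ≤ Submodule.comap (LinearMap.id (R := Γ)) P := fun x hx => hBP hx
    set f : (Γ ⧸ B) →ₗ[Γ] (Γ ⧸ P) := Submodule.mapQ B P LinearMap.id hle with hf
    refine moduleLength_le_of_surjective (f.restrictScalars Zc) ?_
    intro y
    obtain ⟨z, rfl⟩ := P.mkQ_surjective y
    exact ⟨B.mkQ z, by simp [hf, Submodule.mapQ_apply]⟩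
  have step3 : moduleLength Zc (Γ ⧸ B) ≤ (m : ℕ∞) * moduleLength Zc (Zc ⧸ I) := by
    apply moduleLength_le_of_gen I m (Γ ⧸ B) (fun i => B.mkQ (s i))
    · rw [eq_top_iff]
      rintro y -
      obtain ⟨z, rfl⟩ := B.mkQ_surjective y
      obtain ⟨c, hc⟩ := hgen z
      have : B.mkQ z = ∑ i, c i • B.mkQ (s i) := by
        rw [hc, map_sum]
        refine Finset.sum_congr rfl fun i _ => ?_
        have : (c i : Γ) * s i = (c i : Γ) • s i := rfl
        rw [this, map_smul]
        rfl
      rw [this]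
      exact Submodule.sum_mem _ fun i _ =>
        Submodule.smul_mem _ (c i) (Submodule.subset_span ⟨i, rfl⟩)
    · intro i hi mm
      obtain ⟨w, rfl⟩ := B.mkQ_surjective mm
      have h1 : i • B.mkQ w = B.mkQ ((i : Γ) * w) := by
        have : i • B.mkQ w = (i : Γ) • B.mkQ w := rfl
        rw [this, ← map_smul]
        rfl
      rw [h1]
      have hmem : (i : Γ) * w ∈ B := by
        have : (i : Γ) * w = w * (i : Γ) := (Subring.mem_center_iff.mp i.2 w).symm
        rw [this]
        have hib : (i : Γ) ∈ B := hi
        exact B.mul_mem_left w hib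
      rwa [Submodule.mkQ_apply, Submodule.Quotient.mk_eq_zero]
  exact step1.trans (step2.trans step3)
end

section
/- Let k be a perfect field, Σ a k-algebra, and (M_n)_{n≥1} a family of finite-dimensional indecomposable Σ-modules with End_Σ(M₁) a division ring. Suppose given injective Σ-linear maps α_n : M_n → M_{n+1} and surjective Σ-linear maps β_n : M_{n+1} → M_n for all n ≥ 1 such that: (i) β₁∘α₁ = 0 and β_n∘α_n = α_{n-1}∘β_{n-1} for all n ≥ 2; (ii) for each n ≥ 2 the sequence 0 → M_{n-1} → M_n → M₁ → 0 with maps α_{n-1} and β̂_n := β₁∘β₂∘⋯∘β_{n-1} is exact; (iii) every Σ-endomorphism of M_n maps the image of α_{n-1} into itself; (iv) the almost-split property holds: the sequence 0 → M₁ →^{α₁} M₂ →^{β₁} M₁ → 0 does not split and every homomorphism X → M₁ that is not a split epimorphism factors through β₁, and for each n ≥ 2 the sequence 0 → M_n → M_{n+1} ⊕ M_{n-1} → M_n → 0 with maps (α_n, β_{n-1})ᵗ and (β_n, α_{n-1}) does not split and every homomorphism X → M_n that is not a split epimorphism factors through (β_n, α_{n-1}) : M_{n+1} ⊕ M_{n-1}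 → M_n. Then for every n ≥ 1 there is an isomorphism of k-algebras End_Σ(M_n)/Rad(End_Σ(M_n)) ≅ End_Σ(M₁). -/
open scoped TensorProduct

universe u

/-- A bundled finite-dimensional left module over a `k`-algebra `Γ`, with `k` acting
centrally (through the `Γ`-action). -/
structure FDModuleOver (k Γ : Type u) [Field k] [Ring Γ] [Algebra k Γ] : Type (u + 1) where
  carrier : Type u
  [isAddCommGroup : AddCommGroup carrier]
  [isModuleK : Module k carrier]
  [isModule : Module Γ carrier]
  [isTower : IsScalarTower k Γ carrier]
  [isFD : FiniteDimensional k carrier]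

attribute [instance] FDModuleOver.isAddCommGroup FDModuleOver.isModuleK FDModuleOver.isModule
  FDModuleOver.isTower FDModuleOver.isFD

instance (k Γ : Type u) [Field k] [Ring Γ] [Algebra k Γ] : CoeSort (FDModuleOver k Γ) (Type u) :=
  ⟨FDModuleOver.carrier⟩

/-- For surjections `β n : M (n+1) → M n`, the composite `β̂ : M (n+1) → M 1` given by
`β 1 ∘ β 2 ∘ ⋯ ∘ β n` (the identity for `n = 0`). With the paper's numbering this is
`β̂_{n+1} : M_{n+1} → M₁`. -/
def betaHat {k A : Type u} [Field k] [Ring A] [Algebra k A] (M : ℕ → FDModuleOver k A)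
    (β : ∀ n : ℕ, (M (n + 1)).carrier →ₗ[A] (M n).carrier) :
    ∀ n : ℕ, (M (n + 1)).carrier →ₗ[A] (M 1).carrier
  | 0 => LinearMap.id
  | n + 1 => (betaHat M β n).comp (β (n + 1))

variable {k A : Type u} [Field k] [Ring A] [Algebra k A]

lemma aux_bijective_of_injective {N : Type u} [AddCommGroup N] [Module k N] [Module A N]
    [IsScalarTower k A N] [FiniteDimensional k N]
    (f : N →ₗ[A] N) (hf : Function.Injective f) :
    Function.Bijective f := by
  refine ⟨hf, ?_⟩
  have h2 : Function.Surjective (f.restrictScalars k) :=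
    (LinearMap.injective_iff_surjective (f := f.restrictScalars k)).mp hf
  exact h2

lemma aux_fitting {N : Type u} [AddCommGroup N] [Module k N] [Module A N]
    [IsScalarTower k A N] [FiniteDimensional k N]
    (hind : IsIndecomposableModule A N) (f : Module.End A N) :
    Function.Bijective f ∨ IsNilpotent f := by
  haveI hn : IsNoetherian A N := isNoetherian_of_tower k inferInstance
  haveI ha : IsArtinian A N := isArtinian_of_tower k inferInstance
  obtain ⟨t, ht⟩ := Filter.eventually_atTop.mp f.eventually_isCompl_ker_pow_range_pow
  have hc := ht (t + 1) (Nat.le_succ t)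
  rcases hind.2 _ _ hc with h | h
  · left
    apply aux_bijective_of_injective (k := k)
    have hle : LinearMap.ker f ≤ LinearMap.ker (f ^ (t + 1)) := by
      intro x hx
      rw [LinearMap.mem_ker] at hx ⊢
      simp [pow_succ, Module.End.mul_apply, hx]
    rw [← LinearMap.ker_eq_bot]
    exact le_bot_iff.mp (h ▸ hle)
  · right
    exact ⟨t + 1, LinearMap.range_eq_bot.mp h⟩

lemma aux_nontrivial_end {N : Type u} [AddCommGroup N] [Module A N] (hN : Nontrivial N) :
    Nontrivial (Module.End A N) := by
  obtain ⟨x, hx⟩ := exists_ne (0 : N)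
  exact ⟨1, 0, fun h => hx (by simpa using LinearMap.ext_iff.mp h x)⟩

lemma aux_mem_jacobson_iff {N : Type u} [AddCommGroup N] [Module k N] [Module A N]
    [IsScalarTower k A N] [FiniteDimensional k N]
    (hind : IsIndecomposableModule A N) (f : Module.End A N) :
    f ∈ Ideal.jacobson (⊥ : Ideal (Module.End A N)) ↔ ¬ IsUnit f := by
  haveI hN : Nontrivial N := hind.1
  haveI := aux_nontrivial_end (A := A) hN
  constructor
  · intro hmem hu
    have htop : Ideal.jacobson (⊥ : Ideal (Module.End A N)) = ⊤ :=
      Ideal.eq_top_of_isUnit_mem _ hmem hu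
    obtain ⟨K, hK, -⟩ := Ideal.exists_le_maximal (⊥ : Ideal (Module.End A N)) bot_ne_top
    have hle : Ideal.jacobson (⊥ : Ideal (Module.End A N)) ≤ K := sInf_le ⟨bot_le, hK⟩
    rw [htop] at hle
    exact hK.ne_top (top_le_iff.mp hle)
  · intro hf
    rw [Ideal.jacobson, Submodule.mem_sInf]
    intro K hK
    obtain ⟨-, hKmax⟩ := hK
    by_contra hfK
    have hlt : K < K ⊔ Ideal.span {f} := by
      refine lt_of_le_of_ne le_sup_left fun h => hfK ?_
      have hmem : f ∈ K ⊔ Ideal.span {f} :=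
        Submodule.mem_sup_right (Ideal.subset_span (Set.mem_singleton f))
      rwa [← h] at hmem
    have htop : K ⊔ Ideal.span {f} = ⊤ := hKmax.1.2 _ hlt
    have h1 : (1 : Module.End A N) ∈ K ⊔ Ideal.span {f} := htop ▸ Submodule.mem_top
    obtain ⟨y, hy, z, hz, hyz⟩ := Submodule.mem_sup.mp h1
    rw [Ideal.span, Submodule.mem_span_singleton] at hz
    obtain ⟨c, rfl⟩ := hz
    rw [smul_eq_mul] at hyz
    have hcf : ¬ IsUnit (c * f) := by
      intro hu
      have hb := (Module.End.isUnit_iff _).mp hu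
      have hfi : Function.Injective f := by
        have hcomp : ⇑(c * f) = ⇑c ∘ ⇑f := rfl
        rw [hcomp] at hb
        exact Function.Injective.of_comp hb.1
      exact hf ((Module.End.isUnit_iff f).mpr (aux_bijective_of_injective (k := k) f hfi))
    have hnil : IsNilpotent (c * f) :=
      (aux_fitting (k := k) hind (c * f)).resolve_left fun hb =>
        hcf ((Module.End.isUnit_iff _).mpr hb)
    have hyu : IsUnit y := by
      have h1s : y = 1 - c * f := eq_sub_of_add_eq hyz
      rw [h1s]
      exact hnil.isUnit_one_sub
    exact hKmax.ne_top (Ideal.eq_top_of_isUnit_mem K hy hyu)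

/-- Under the almost-split hypotheses on the uniserial family
`(M_n)`, for every `n ≥ 1` there is an isomorphism of `k`-algebras
`End(M_n)/Rad(End(M_n)) ≅ End(M₁)`, encoded as a surjective `k`-linear ring
homomorphism `End(M_n) → End(M₁)` whose kernel is the Jacobson radical. -/
theorem stmt_11
    {k A : Type u} [Field k] [PerfectField k] [Ring A] [Algebra k A]
    (M : ℕ → FDModuleOver k A)
    -- each `M n` (`n ≥ 1`) is a finite-dimensional indecomposable `A`-module
    (hind : ∀ n, 1 ≤ n → IsIndecomposableModule A (M n).carrier)
    -- `End (M 1)` is a division ring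
    (hdiv : ∀ f : (M 1).carrier →ₗ[A] (M 1).carrier, f ≠ 0 → Function.Bijective f)
    (α : ∀ n : ℕ, (M n).carrier →ₗ[A] (M (n + 1)).carrier)
    (β : ∀ n : ℕ, (M (n + 1)).carrier →ₗ[A] (M n).carrier)
    (hαinj : ∀ n, 1 ≤ n → Function.Injective (α n))
    (hβsurj : ∀ n, 1 ≤ n → Function.Surjective (β n))
    -- (i): `β₁ ∘ α₁ = 0` and `β_n ∘ α_n = α_{n-1} ∘ β_{n-1}` for `n ≥ 2`
    (hi₁ : (β 1).comp (α 1) = 0)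
    (hi₂ : ∀ n, 1 ≤ n → (β (n + 1)).comp (α (n + 1)) = (α n).comp (β n))
    -- (ii): for `n ≥ 2` (here indexed by `n ≥ 1`) the sequence
    -- `0 → M n → M (n+1) → M 1 → 0` with maps `α n` and `β̂` is exact
    (hii : ∀ n, 1 ≤ n →
      LinearMap.range (α n) = LinearMap.ker (betaHat M β n) ∧
      Function.Surjective (betaHat M β n))
    -- (iii): every endomorphism of `M (n+1)` maps the image of `α n` into itself
    (hiii : ∀ n, 1 ≤ n → ∀ f : (M (n + 1)).carrier →ₗ[A] (M (n + 1)).carrier,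
      ∀ x ∈ LinearMap.range (α n), f x ∈ LinearMap.range (α n))
    -- (iv): the almost split property for `0 → M₁ → M₂ → M₁ → 0` ...
    (hiv₁ : ¬ ∃ s : (M 1).carrier →ₗ[A] (M 2).carrier, (β 1).comp s = LinearMap.id)
    (hiv₁' : ∀ (X : Type u) [AddCommGroup X] [Module A X]
      (g : X →ₗ[A] (M 1).carrier),
      ¬ (∃ s : (M 1).carrier →ₗ[A] X, g.comp s = LinearMap.id) →
      ∃ h : X →ₗ[A] (M 2).carrier, (β 1).comp h = g)
    -- ... and for `0 → M_n → M_{n+1} ⊕ M_{n-1} → M_n → 0`, `n ≥ 2`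
    (hiv₂ : ∀ n, 1 ≤ n →
      ¬ ∃ s : (M (n + 1)).carrier →ₗ[A] ((M (n + 2)).carrier × (M n).carrier),
        (((β (n + 1)).coprod (α n)).comp s) = LinearMap.id)
    (hiv₂' : ∀ n, 1 ≤ n → ∀ (X : Type u) [AddCommGroup X] [Module A X]
      (g : X →ₗ[A] (M (n + 1)).carrier),
      ¬ (∃ s : (M (n + 1)).carrier →ₗ[A] X, g.comp s = LinearMap.id) →
      ∃ h : X →ₗ[A] ((M (n + 2)).carrier × (M n).carrier),
        ((β (n + 1)).coprod (α n)).comp h = g)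
    :
    ∀ n, 1 ≤ n →
      ∃ φ : Module.End A (M n).carrier →+* Module.End A (M 1).carrier,
        Function.Surjective φ ∧
        (∀ f, φ f = 0 ↔ f ∈ Ideal.jacobson (⊥ : Ideal (Module.End A (M n).carrier))) ∧
        ∀ (a : k) (f : Module.End A (M n).carrier), φ (a • f) = a • φ f := by
  intro n hn
  obtain ⟨m, rfl⟩ : ∃ m, n = m + 1 := ⟨n - 1, by omega⟩
  haveI hNt1 : Nontrivial (M 1).carrier := (hind 1 le_rfl).1
  haveI hNtm : Nontrivial (M (m + 1)).carrier := (hind (m + 1) (by omega)).1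
  have hb0 : betaHat M β 0 = LinearMap.id := rfl
  have hbsucc : ∀ j, betaHat M β (j + 1) = (betaHat M β j).comp (β (j + 1)) := fun _ => rfl
  have hBsurj : Function.Surjective (betaHat M β m) := by
    cases m with
    | zero => exact fun x => ⟨x, rfl⟩
    | succ j => exact (hii (j + 1) (by omega)).2
  have hker : ∀ f : Module.End A (M (m + 1)).carrier,
      LinearMap.ker (betaHat M β m) ≤
        Submodule.comap f (LinearMap.ker (betaHat M β m)) := by
    intro f x hx
    cases m with
    | zero =>
      have hx0 : x = 0 := by simpa [hb0] using hx
      simp [Submodule.mem_comap, hx0]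
    | succ j =>
      have hrange := (hii (j + 1) (by omega)).1
      have hx' : x ∈ LinearMap.range (α (j + 1)) := by rw [hrange]; exact hx
      have hfx := hiii (j + 1) (by omega) f x hx'
      have hfx' : f x ∈ LinearMap.ker (betaHat M β (j + 1)) := by rw [← hrange]; exact hfx
      exact hfx'
  have dimrel : ∀ i, 1 ≤ i → Module.finrank k (M (i + 1)).carrier =
      Module.finrank k (M i).carrier + Module.finrank k (M 1).carrier := by
    intro i hi
    obtain ⟨hkerEq, hsurj⟩ := hii i hi
    have h1 := LinearMap.finrank_range_add_finrank_ker ((betaHat M β i).restrictScalars k)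
    have h2 : LinearMap.range ((betaHat M β i).restrictScalars k) = ⊤ :=
      LinearMap.range_eq_top.mpr hsurj
    have h3 : LinearMap.ker ((betaHat M β i).restrictScalars k) =
        LinearMap.range ((α i).restrictScalars k) := by
      ext x
      constructor
      · intro hx
        have hx' : x ∈ LinearMap.ker (betaHat M β i) := hx
        rw [← hkerEq] at hx'
        obtain ⟨y, hy⟩ := hx'
        exact ⟨y, hy⟩
      · rintro ⟨y, rfl⟩
        have hx' : α i y ∈ LinearMap.range (α i) := ⟨y, rfl⟩
        rw [hkerEq] at hx'
        exact hx'
    have h4 : Module.finrank k (LinearMap.range ((α i).restrictScalars k)) =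
        Module.finrank k (M i).carrier :=
      LinearMap.finrank_range_of_inj (hαinj i hi)
    rw [h2, h3, h4, finrank_top] at h1
    omega
  have hdesc : ∀ f : Module.End A (M (m + 1)).carrier,
      ∃ g : Module.End A (M 1).carrier,
        ∀ x, g (betaHat M β m x) = betaHat M β m (f x) := by
    intro f
    set p := LinearMap.ker (betaHat M β m) with hp
    set ebar := p.liftQ (betaHat M β m) le_rfl with he
    have hebij : Function.Bijective ebar := by
      constructor
      · rw [← LinearMap.ker_eq_bot]
        exact Submodule.ker_liftQ_eq_bot _ _ le_rfl le_rfl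
      · intro y
        obtain ⟨x, rfl⟩ := hBsurj y
        exact ⟨Submodule.Quotient.mk x, by rw [he, Submodule.liftQ_apply]⟩
    set e := LinearEquiv.ofBijective ebar hebij with heq
    refine ⟨(ebar.comp (Submodule.mapQ p p f (hker f))).comp
      (e.symm : (M 1).carrier →ₗ[A] _), fun x => ?_⟩
    have h1 : e.symm (betaHat M β m x) = Submodule.Quotient.mk x := by
      apply e.injective
      rw [LinearEquiv.apply_symm_apply]
      show betaHat M β m x = ebar (Submodule.Quotient.mk x)
      rw [he, Submodule.liftQ_apply]
    simp only [LinearMap.comp_apply, LinearEquiv.coe_coe, h1, Submodule.mapQ_apply,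
      Submodule.liftQ_apply, he]
  choose Φ hΦ using hdesc
  have huniq : ∀ g₁ g₂ : Module.End A (M 1).carrier,
      (∀ x, g₁ (betaHat M β m x) = g₂ (betaHat M β m x)) → g₁ = g₂ := by
    intro g₁ g₂ h
    ext y
    obtain ⟨x, rfl⟩ := hBsurj y
    exact h x
  obtain ⟨φ, hφcoe⟩ : ∃ φ : Module.End A (M (m + 1)).carrier →+*
      Module.End A (M 1).carrier, ∀ f, φ f = Φ f :=
    ⟨{ toFun := Φ,
       map_one' := huniq _ _ fun x => by rw [hΦ]; rfl,
       map_mul' := fun f g => huniq _ _ fun x => by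
         rw [hΦ, Module.End.mul_apply, Module.End.mul_apply, hΦ, hΦ],
       map_zero' := huniq _ _ fun x => by rw [hΦ]; simp,
       map_add' := fun f g => huniq _ _ fun x => by
         rw [hΦ, LinearMap.add_apply, LinearMap.add_apply, hΦ, hΦ, map_add] },
     fun f => rfl⟩
  refine ⟨φ, ?_, ?_, ?_⟩
  · -- surjectivity
    intro g
    suffices h : ∀ j, ∃ f : Module.End A (M (j + 1)).carrier,
        ∀ x, betaHat M β j (f x) = g (betaHat M β j x) by
      obtain ⟨f, hf⟩ := h m
      refine ⟨f, ?_⟩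
      rw [hφcoe]
      exact huniq _ _ fun x => (hΦ f x).trans (hf x)
    intro j
    induction j with
    | zero => exact ⟨g, fun x => rfl⟩
    | succ j ih =>
      obtain ⟨f, hf⟩ := ih
      have hnot : ¬ ∃ s : (M (j + 1)).carrier →ₗ[A] (M (j + 2)).carrier,
          ((f.comp (β (j + 1))).comp s) = LinearMap.id := by
        rintro ⟨s, hs⟩
        have hus : ∀ y, f (β (j + 1) (s y)) = y := fun y => LinearMap.ext_iff.mp hs y
        have hcompl : IsCompl (LinearMap.ker (f.comp (β (j + 1)))) (LinearMap.range s) := by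
          constructor
          · rw [Submodule.disjoint_def]
            rintro x hx ⟨y, rfl⟩
            have h0 : f (β (j + 1) (s y)) = 0 := hx
            rw [hus y] at h0
            rw [h0, map_zero]
          · rw [codisjoint_iff, eq_top_iff]
            rintro x -
            have hmem1 : x - s (f (β (j + 1) x)) ∈ LinearMap.ker (f.comp (β (j + 1))) := by
              rw [LinearMap.mem_ker]
              simp [LinearMap.comp_apply, map_sub, hus]
            exact Submodule.mem_sup.mpr ⟨_, hmem1, s (f (β (j + 1) x)),
              LinearMap.mem_range_self s _, by abel⟩
        rcases (hind (j + 2) (by omega)).2 _ _ hcompl with h | h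
        · have hui : Function.Injective (f.comp (β (j + 1))) := LinearMap.ker_eq_bot.mp h
          have hle : Module.finrank k (M (j + 2)).carrier ≤
              Module.finrank k (M (j + 1)).carrier :=
            LinearMap.finrank_le_finrank_of_injective
              (f := (f.comp (β (j + 1))).restrictScalars k) hui
          have hrank := dimrel (j + 1) (by omega)
          have hpos : 0 < Module.finrank k (M 1).carrier := Module.finrank_pos
          have hcast : Module.finrank k (M (j + 2)).carrier =
              Module.finrank k (M (j + 1 + 1)).carrier := rfl
          omega
        · haveI : Nontrivial (M (j + 1)).carrier := (hind (j + 1) (by omega)).1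
          obtain ⟨x0, hx0⟩ := exists_ne (0 : (M (j + 1)).carrier)
          have hs0 : s x0 = 0 := by
            have hmem : s x0 ∈ LinearMap.range s := LinearMap.mem_range_self s x0
            rw [h] at hmem
            simpa using hmem
          have h1 := hus x0
          rw [hs0] at h1
          simp only [map_zero] at h1
          exact hx0 h1.symm
      rcases Nat.eq_zero_or_pos j with hj0 | hjpos
      · subst hj0
        obtain ⟨h, hh⟩ := hiv₁' (M 2).carrier (f.comp (β 1)) hnot
        refine ⟨h, fun x => ?_⟩
        have hx : β 1 (h x) = f (β 1 x) := by
          have := LinearMap.ext_iff.mp hh x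
          simpa using this
        have hgx : f (β 1 x) = g (β 1 x) := by
          have := hf (β 1 x)
          simpa [hb0] using this
        show β 1 (h x) = g (β 1 x)
        rw [hx, hgx]
      · obtain ⟨h, hh⟩ := hiv₂' j hjpos (M (j + 2)).carrier (f.comp (β (j + 1))) hnot
        refine ⟨(LinearMap.fst A _ _).comp h, fun x => ?_⟩
        have hx : β (j + 1) (h x).1 + α j (h x).2 = f (β (j + 1) x) := by
          have := LinearMap.ext_iff.mp hh x
          simpa [LinearMap.coprod_apply] using this
        have hker0 : betaHat M β j (α j ((h x).2)) = 0 := by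
          have hmem : α j ((h x).2) ∈ LinearMap.range (α j) := LinearMap.mem_range_self _ _
          rw [(hii j hjpos).1] at hmem
          exact hmem
        have hstep : betaHat M β j (β (j + 1) ((h x).1)) =
            betaHat M β j (f (β (j + 1) x)) := by
          rw [← hx, map_add, hker0, add_zero]
        calc betaHat M β (j + 1) (((LinearMap.fst A _ _).comp h) x)
            = betaHat M β j (β (j + 1) ((h x).1)) := rfl
          _ = betaHat M β j (f (β (j + 1) x)) := hstep
          _ = g (betaHat M β j (β (j + 1) x)) := hf (β (j + 1) x)
          _ = g (betaHat M β (j + 1) x) := rfl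
  · -- kernel = Jacobson radical
    intro f
    rw [aux_mem_jacobson_iff (k := k) (hind (m + 1) (by omega)) f, hφcoe]
    constructor
    · intro h0 hu
      obtain ⟨x0, hx0⟩ := exists_ne (0 : (M 1).carrier)
      have hb := (Module.End.isUnit_iff f).mp hu
      obtain ⟨z, hz⟩ := hBsurj x0
      obtain ⟨w, hw⟩ := hb.2 z
      have h2 : Φ f (betaHat M β m w) = x0 := by rw [hΦ, hw, hz]
      rw [h0] at h2
      exact hx0 (by simpa using h2.symm)
    · intro hnu
      have hnil : IsNilpotent f :=
        (aux_fitting (k := k) (hind (m + 1) (by omega)) f).resolve_left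
          fun hb => hnu ((Module.End.isUnit_iff f).mpr hb)
      obtain ⟨t, ht⟩ := hnil
      by_contra hne
      have hu : IsUnit (φ f) := (Module.End.isUnit_iff _).mpr
        (hdiv (φ f) (by rw [hφcoe]; exact hne))
      have hup : IsUnit ((φ f) ^ t) := hu.pow t
      rw [← map_pow, ht, map_zero] at hup
      obtain ⟨x0, hx0⟩ := exists_ne (0 : (M 1).carrier)
      obtain ⟨y, hy⟩ := ((Module.End.isUnit_iff _).mp hup).2 x0
      exact hx0 (by simpa using hy.symm)
  · -- k-linearity
    intro a f
    rw [hφcoe, hφcoe]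
    apply huniq
    intro x
    rw [hΦ, LinearMap.smul_apply, LinearMap.smul_apply, hΦ]
    exact LinearMap.map_smul_of_tower _ a (f x)
end

section
/- Let k be a field and Σ, Λ two k-algebras. Suppose G is a functor from the category of finite-dimensional left Σ-modules to the category of finite-dimensional left Λ-modules such that: G(M) is indecomposable for every finite-dimensional indecomposable Σ-module M; G(M) ≅ G(N) implies M ≅ N for finite-dimensional Σ-modules M, N; and there exist constants c, c' ∈ ℕ with endol(M) ≤ c·endol(G(M)) and endol(G(M)) ≤ c'·endol(M) for every finite-dimensional indecomposable Σ-module M. If Σ satisfies EBTII, then Λ satisfies EBTII. -/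
open scoped TensorProduct

universe u

section RepType

variable (k Γ : Type u) [Field k] [Ring Γ] [Algebra k Γ]

/-- There is an infinite family of pairwise non-isomorphic finite-dimensional
indecomposable `Γ`-modules, all of endolength `d`. -/
def HasInfFamilyOfEndolength (d : ℕ) : Prop :=
  ∃ M : ℕ → FDModuleOver k Γ,
    (∀ i, IsIndecomposableModule Γ (M i).carrier) ∧
    (∀ i, endol Γ (M i).carrier = (d : ℕ∞)) ∧
    ∀ i j, i ≠ j → IsEmpty ((M i).carrier ≃ₗ[Γ] (M j).carrier)

/-- `Γ` is e-discrete: for each `d` there are only finitely many isomorphism classes of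
finite-dimensional indecomposable `Γ`-modules of endolength `d`. -/
def EDiscrete : Prop := ∀ d : ℕ, ¬ HasInfFamilyOfEndolength k Γ d

/-- `Γ` has infinite representation type: there are infinitely many pairwise
non-isomorphic finite-dimensional indecomposable `Γ`-modules. -/
def HasInfiniteRepType : Prop :=
  ∃ M : ℕ → FDModuleOver k Γ,
    (∀ i, IsIndecomposableModule Γ (M i).carrier) ∧
    ∀ i j, i ≠ j → IsEmpty ((M i).carrier ≃ₗ[Γ] (M j).carrier)

/-- `Γ` satisfies EBTII: there is an infinite strictly increasing sequence of endolengths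
`d₀ < d₁ < ⋯` such that for each `dᵢ` there are infinitely many pairwise non-isomorphic
finite-dimensional indecomposable `Γ`-modules of endolength `dᵢ`. -/
def SatisfiesEBTII : Prop :=
  ∃ d : ℕ → ℕ, StrictMono d ∧ ∀ i, HasInfFamilyOfEndolength k Γ (d i)

end RepType

/-!
`G` sends an infinite family of endolength `d` to a family of pairwise non-isomorphic
indecomposables of endolength at most `c' * d`; by pigeonhole infinitely many of them share one
endolength `e`, and `d ≤ c * e`. As `d` is unbounded, so is `e`.
-/

lemma satisfiesEBTII_of_infinite {k Γ : Type u} [Field k] [Ring Γ] [Algebra k Γ]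
    (h : {d | HasInfFamilyOfEndolength k Γ d}.Infinite) : SatisfiesEBTII k Γ :=
  ⟨Nat.nth _, Nat.nth_strictMono h, Nat.nth_mem_of_infinite h⟩

lemma ENat.exists_injective_comp_eq_of_le {f : ℕ → ℕ∞} {B : ℕ} (hf : ∀ i, f i ≤ B) :
    ∃ (e : ℕ) (σ : ℕ → ℕ), Function.Injective σ ∧ ∀ j, f (σ j) = e := by
  have hf_toNat (i : ℕ) : (f i).toNat < B + 1 :=
    Nat.lt_succ_of_le (ENat.toNat_le_of_le_natCast (hf i))
  let g (i : ℕ) : Fin (B + 1) := ⟨(f i).toNat, hf_toNat i⟩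
  obtain ⟨e, he⟩ := Finite.exists_infinite_fiber g
  let σ := Infinite.natEmbedding (g ⁻¹' {e})
  refine ⟨e, fun j => σ j, Subtype.val_injective.comp σ.injective, fun j => ?_⟩
  have hσj : (f (σ j)).toNat = e := congrArg Fin.val (σ j).2
  rw [← hσj, ENat.natCast_toNat (ne_top_of_le_ne_top (ENat.natCast_ne_top B) (hf _))]

section Transfer

variable {k A Λ : Type u} [Field k] [Ring A] [Algebra k A] [Ring Λ] [Algebra k Λ]
  (G : FDModuleOver k A → FDModuleOver k Λ)

lemma HasInfFamilyOfEndolength.exists_image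
    (hind : ∀ M : FDModuleOver k A, IsIndecomposableModule A M.carrier →
      IsIndecomposableModule Λ (G M).carrier)
    (hrefl : ∀ M N : FDModuleOver k A,
      Nonempty ((G M).carrier ≃ₗ[Λ] (G N).carrier) →
      Nonempty (M.carrier ≃ₗ[A] N.carrier))
    {c c' : ℕ}
    (hlower : ∀ M : FDModuleOver k A, IsIndecomposableModule A M.carrier →
      endol A M.carrier ≤ (c : ℕ∞) * endol Λ (G M).carrier)
    (hupper : ∀ M : FDModuleOver k A, IsIndecomposableModule A M.carrier →
      endol Λ (G M).carrier ≤ (c' : ℕ∞) * endol A M.carrier)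
    {d : ℕ} (h : HasInfFamilyOfEndolength k A d) :
    ∃ e, d ≤ c * e ∧ HasInfFamilyOfEndolength k Λ e := by
  obtain ⟨M, hMind, hMendol, hMiso⟩ := h
  obtain ⟨e, σ, hσ, he⟩ := ENat.exists_injective_comp_eq_of_le (B := c' * d)
    (f := fun i => endol Λ (G (M i)).carrier) fun i => by
      simpa [hMendol i] using hupper _ (hMind i)
  refine ⟨e, ?_, fun j => G (M (σ j)), fun j => hind _ (hMind _), he, fun a b hab => ?_⟩
  · have := hlower _ (hMind (σ 0))
    rw [hMendol, he] at this
    exact_mod_cast this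
  · exact ⟨fun φ => (hMiso _ _ (hσ.ne hab)).false (hrefl _ _ ⟨φ⟩).some⟩

end Transfer

/-- Suppose `G` carries finite-dimensional `A`-modules to
finite-dimensional `Λ`-modules, preserves indecomposability, reflects isomorphism
classes, and controls endolength of indecomposables. If `A` satisfies EBTII, then so
does `Λ`. -/
theorem stmt_16 {k A Λ : Type u} [Field k] [Ring A] [Algebra k A] [Ring Λ] [Algebra k Λ]
    (G : FDModuleOver k A → FDModuleOver k Λ)
    (hind : ∀ M : FDModuleOver k A, IsIndecomposableModule A M.carrier →
      IsIndecomposableModule Λ (G M).carrier)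
    (hrefl : ∀ M N : FDModuleOver k A,
      Nonempty ((G M).carrier ≃ₗ[Λ] (G N).carrier) →
      Nonempty (M.carrier ≃ₗ[A] N.carrier))
    (c c' : ℕ)
    (hctrl : ∀ M : FDModuleOver k A, IsIndecomposableModule A M.carrier →
      endol A M.carrier ≤ (c : ℕ∞) * endol Λ (G M).carrier ∧
      endol Λ (G M).carrier ≤ (c' : ℕ∞) * endol A M.carrier)
    (hA : SatisfiesEBTII k A) :
    SatisfiesEBTII k Λ := by
  obtain ⟨d, hd, hfam⟩ := hA
  refine satisfiesEBTII_of_infinite (Set.infinite_of_forall_exists_gt fun n => ?_)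
  obtain ⟨e, hde, he⟩ := (hfam (c * n + 1)).exists_image G hind hrefl
    (fun M hM => (hctrl M hM).1) (fun M hM => (hctrl M hM).2)
  refine ⟨e, he, Nat.lt_of_mul_lt_mul_left (a := c) ?_⟩
  calc c * n < c * n + 1 := Nat.lt_succ_self _
    _ ≤ d (c * n + 1) := hd.le_apply
    _ ≤ c * e := hde
end
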